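/- arXiv:1509.01636 — 4 statements merged into one kernel-verified Lean document; each statement's English description precedes it below -/
import Mathlib

section
/- If C is an invertible complex 4×4 matrix with determinant 1 satisfying C⁻¹ γ_μ C = -γ_μᵀ for all four Euclidean gamma matrices γ_μ (which satisfy γ_μ γ_ν + γ_ν γ_μ = 2 δ_{μν} I and γ_μ† = γ_μ), then C satisfies Cᵀ = -C and C† = C⁻¹. -/
/-!
Conjugation by `γ i` multiplies the ordered monomial `γ_s = ∏_{j ∈ s} γ j` by
`(-1) ^ #(s \ {i})`; with an even number of generators these sign characters separate the
`2 ^ n` monomials, so `trace (γ_s γ_t⁻¹) = 0` for `s ≠ t` and the monomials are linearly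
independent. For four generators in `M₄` they form a basis, so a matrix commuting with every
`γ i` is scalar (Schur's lemma).

Both `Cᵀ` and `C` intertwine `-γᵀ` with `γ`, so `Cᵀ C⁻¹` is scalar and `Cᵀ = b C` with
`b = ±1`. If `b = 1`, the ten matrices `γ i C`, `γ i γ j C` (`i < j`) would be linearly
independent and antisymmetric, but antisymmetric `4 × 4` matrices form a space of dimension 6.
Similarly `C Cᴴ` commutes with every `γ i` because the `γ i` are hermitian, so `C Cᴴ = e • 1`
with `e ≥ 0`, and `e ^ 4 = |det C| ^ 2 = 1` forces `e = 1`.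
-/

open Matrix

theorem mul_list_prod_map_eq_neg_one_pow_smul {A ι : Type*} [Ring A] (a : A) (f : ι → A)
    (e : ι → ℕ) (l : List ι) (h : ∀ i ∈ l, a * f i = (-1 : ℤ) ^ e i • (f i * a)) :
    a * (l.map f).prod = (-1 : ℤ) ^ (l.map e).sum • ((l.map f).prod * a) := by
  induction l with
  | nil => simp
  | cons i l ih =>
    simp only [List.map_cons, List.prod_cons, List.sum_cons, pow_add, ← smul_smul]
    rw [← mul_assoc, h i List.mem_cons_self, smul_mul_assoc, mul_assoc, mul_assoc,
      ih fun j hj => h j (List.mem_cons_of_mem i hj), mul_smul_comm]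

theorem Finset.exists_odd_card_erase_add_card_erase {α : Type*} [Fintype α] [DecidableEq α]
    (hα : Even (Fintype.card α)) {s t : Finset α} (hst : s ≠ t) :
    ∃ a, Odd ((s.erase a).card + (t.erase a).card) := by
  have card_erase (u : Finset α) (a : α) :
      (u.erase a).card + (if a ∈ u then 1 else 0) = u.card := by
    split_ifs with h
    exacts [Finset.card_erase_add_one h, by simp [h]]
  simp only [Nat.odd_iff]
  by_cases hpar : (s.card + t.card) % 2 = 0
  · obtain ⟨a, ha⟩ : ∃ a, ¬(a ∈ s ↔ a ∈ t) := by
      by_contra! h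
      exact hst (Finset.ext h)
    refine ⟨a, ?_⟩
    have hs := card_erase s a
    have ht := card_erase t a
    split_ifs at hs ht <;> first | tauto | omega
  · obtain ⟨a, ha⟩ : ∃ a, (a ∈ s ↔ a ∈ t) := by
      by_contra! h
      have hts : t = sᶜ := Finset.ext fun a => by have := h a; rw [Finset.mem_compl]; tauto
      rw [hts, Finset.card_add_card_compl] at hpar
      exact hpar (Nat.even_iff.mp hα)
    refine ⟨a, ?_⟩
    have hs := card_erase s a
    have ht := card_erase t a
    split_ifs at hs ht <;> first | tauto | omega

theorem Finset.sort_pair {ι : Type*} [LinearOrder ι] {i j : ι} (hij : i < j) :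
    ({i, j} : Finset ι).sort = [i, j] := by
  rw [Finset.sort_insert _ (by simpa using hij.le) (by simpa using hij.ne), Finset.sort_singleton]

structure IsCliffordFamily {ι A : Type*} [Ring A] (γ : ι → A) : Prop where
  mul_self : ∀ i, γ i * γ i = 1
  anticomm : ∀ i j, i ≠ j → γ i * γ j = -(γ j * γ i)

theorem IsCliffordFamily.of_anticommutator {ι K A : Type*} [DecidableEq ι] [Field K]
    [CharZero K] [Ring A] [Algebra K A] {γ : ι → A}
    (h : ∀ i j, γ i * γ j + γ j * γ i = (if i = j then (2 : K) else 0) • 1) :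
    IsCliffordFamily γ where
  mul_self i := by
    have hi := h i i
    rw [if_pos rfl, ← two_smul K] at hi
    exact smul_right_injective A two_ne_zero hi
  anticomm i j hij := by
    have hij' := h i j
    rw [if_neg hij, zero_smul] at hij'
    exact eq_neg_of_add_eq_zero_left hij'

def cliffordMonomial {ι A : Type*} [LinearOrder ι] [Monoid A] (γ : ι → A) (s : Finset ι) : A :=
  (s.sort.map γ).prod

section CliffordMonomial

variable {ι A : Type*} [LinearOrder ι] [Ring A] {γ : ι → A}

theorem cliffordMonomial_singleton (i : ι) : cliffordMonomial γ {i} = γ i := by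
  simp [cliffordMonomial]

theorem cliffordMonomial_pair {i j : ι} (hij : i < j) :
    cliffordMonomial γ {i, j} = γ i * γ j := by
  simp [cliffordMonomial, Finset.sort_pair hij]

theorem IsCliffordFamily.mul_cliffordMonomial (hγ : IsCliffordFamily γ) (i : ι) (s : Finset ι) :
    γ i * cliffordMonomial γ s = (-1 : ℤ) ^ (s.erase i).card • (cliffordMonomial γ s * γ i) := by
  have hsum : (s.sort.map fun j => if j = i then 0 else 1).sum = (s.erase i).card := by
    rw [← List.sum_toFinset _ (Finset.sort_nodup _ _), Finset.sort_toFinset, Finset.sum_ite,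
      Finset.sum_const_zero, zero_add, Finset.sum_const, smul_eq_mul, mul_one, Finset.filter_ne']
  rw [cliffordMonomial, mul_list_prod_map_eq_neg_one_pow_smul _ _ (fun j => if j = i then 0 else 1),
    hsum]
  intro j _
  split_ifs with hji
  · rw [hji, pow_zero, one_smul]
  · rw [pow_one, neg_one_zsmul, hγ.anticomm i j (Ne.symm hji)]

theorem IsCliffordFamily.isUnit_cliffordMonomial (hγ : IsCliffordFamily γ) (s : Finset ι) :
    IsUnit (cliffordMonomial γ s) :=
  List.prod_isUnit fun _ hx => by
    obtain ⟨i, -, rfl⟩ := List.mem_map.mp hx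
    exact isUnit_iff_exists.mpr ⟨γ i, hγ.mul_self i, hγ.mul_self i⟩

end CliffordMonomial

section CommRing

variable {R m : Type*} [CommRing R] [Fintype m] [DecidableEq m]

theorem Matrix.mul_nonsing_inv_eq_neg_one_pow_smul {a x : Matrix m m R} (hx : IsUnit x) {k : ℕ}
    (h : a * x = (-1 : ℤ) ^ k • (x * a)) : a * x⁻¹ = (-1 : ℤ) ^ k • (x⁻¹ * a) := by
  have hx' : IsUnit x.det := (isUnit_iff_isUnit_det x).mp hx
  calc a * x⁻¹ = ((-1 : ℤ) ^ k * (-1) ^ k) • (x⁻¹ * (x * a) * x⁻¹) := by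
        rw [← mul_pow, neg_one_mul, neg_neg, one_pow, one_smul, ← mul_assoc,
          nonsing_inv_mul _ hx', one_mul]
    _ = (-1 : ℤ) ^ k • (x⁻¹ * ((-1 : ℤ) ^ k • (x * a)) * x⁻¹) := by
        rw [mul_smul, mul_smul_comm, smul_mul_assoc]
    _ = (-1 : ℤ) ^ k • (x⁻¹ * a) := by
        rw [← h, mul_assoc, mul_assoc, mul_nonsing_inv _ hx', mul_one]

theorem Matrix.semiconjBy_of_nonsing_inv_mul_mul_eq {C g h : Matrix m m R} (hC : IsUnit C)
    (hconj : C⁻¹ * g * C = h) : SemiconjBy C h g := by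
  rw [SemiconjBy, ← hconj, ← mul_assoc, ← mul_assoc,
    mul_nonsing_inv _ ((isUnit_iff_isUnit_det C).mp hC), one_mul]

theorem Matrix.semiconjBy_nonsing_inv_of_nonsing_inv_mul_mul_eq {C g h : Matrix m m R}
    (hC : IsUnit C) (hconj : C⁻¹ * g * C = h) : SemiconjBy C⁻¹ g h := by
  rw [SemiconjBy, ← hconj, mul_assoc, mul_nonsing_inv _ ((isUnit_iff_isUnit_det C).mp hC),
    mul_one]

end CommRing

theorem Matrix.eq_zero_of_transpose_eq_neg {K m : Type*} [Field K] [CharZero K] [LinearOrder m]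
    {X : Matrix m m K} (hX : Xᵀ = -X) (hupper : ∀ i j, i < j → X i j = 0) : X = 0 := by
  ext i j
  have hji : X j i = -X i j := by simpa using congrFun (congrFun hX i) j
  rcases lt_trichotomy i j with hlt | rfl | hgt
  · exact hupper i j hlt
  · exact self_eq_neg.mp hji
  · rw [← neg_neg (X i j), ← hji, hupper j i hgt, neg_zero, zero_apply]

theorem Matrix.card_le_of_linearIndependent_of_transpose_eq_neg {K m ι : Type*} [Field K]
    [CharZero K] [Fintype m] [LinearOrder m] [Fintype ι] {v : ι → Matrix m m K}
    (hv : LinearIndependent K v) (hskew : ∀ i, (v i)ᵀ = -v i) :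
    Fintype.card ι ≤ Fintype.card {p : m × m // p.1 < p.2} := by
  have hupper : LinearIndependent K fun i (p : {p : m × m // p.1 < p.2}) => v i p.1.1 p.1.2 := by
    rw [Fintype.linearIndependent_iff] at hv ⊢
    intro c hc
    refine hv c (eq_zero_of_transpose_eq_neg ?_ fun a b hab => ?_)
    · simp only [transpose_sum, transpose_smul, hskew, smul_neg, Finset.sum_neg_distrib]
    · simpa [sum_apply] using congrFun hc ⟨(a, b), hab⟩
  simpa using hupper.fintype_card_le_finrank

section Field

variable {K m : Type*} [Field K] [CharZero K] [Fintype m] [DecidableEq m]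

theorem Matrix.trace_eq_zero_of_mul_eq_neg_mul {g X : Matrix m m K} (hg : g * g = 1)
    (h : g * X = -(X * g)) : trace X = 0 := by
  have : trace X = -trace X :=
    calc trace X = trace (g * X * g) := by rw [trace_mul_cycle, hg, one_mul]
      _ = -trace X := by rw [h, neg_mul, trace_neg, mul_assoc, hg, mul_one]
  exact self_eq_neg.mp this

theorem Matrix.linearIndependent_of_trace_mul_nonsing_inv [Nonempty m] {ι : Type*} [Fintype ι]
    {v : ι → Matrix m m K} (hv : ∀ i, IsUnit (v i))
    (horth : ∀ i j, i ≠ j → trace (v i * (v j)⁻¹) = 0) : LinearIndependent K v := by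
  rw [Fintype.linearIndependent_iff]
  intro c hc j
  have htr := congrArg (fun X => trace (X * (v j)⁻¹)) hc
  simp only [Finset.sum_mul, trace_sum, smul_mul_assoc, trace_smul, zero_mul, trace_zero] at htr
  rw [Finset.sum_eq_single j (fun i _ hij => by rw [horth i j hij, smul_zero]) (by simp),
    mul_nonsing_inv _ ((isUnit_iff_isUnit_det _).mp (hv j)), trace_one, smul_eq_mul] at htr
  exact (mul_eq_zero.mp htr).resolve_right (Nat.cast_ne_zero.mpr Fintype.card_ne_zero)

variable {ι : Type*} [LinearOrder ι] [Fintype ι] {γ : ι → Matrix m m K}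

theorem IsCliffordFamily.trace_cliffordMonomial_mul_nonsing_inv (hγ : IsCliffordFamily γ)
    (hι : Even (Fintype.card ι)) {s t : Finset ι} (hst : s ≠ t) :
    trace (cliffordMonomial γ s * (cliffordMonomial γ t)⁻¹) = 0 := by
  obtain ⟨i, hi⟩ := Finset.exists_odd_card_erase_add_card_erase hι hst
  have ht := mul_nonsing_inv_eq_neg_one_pow_smul (hγ.isUnit_cliffordMonomial t)
    (hγ.mul_cliffordMonomial i t)
  refine trace_eq_zero_of_mul_eq_neg_mul (hγ.mul_self i) ?_
  rw [← mul_assoc, hγ.mul_cliffordMonomial i s, smul_mul_assoc, mul_assoc, ht, mul_smul_comm,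
    smul_smul, ← pow_add, hi.neg_one_pow, neg_one_zsmul, mul_assoc]

theorem IsCliffordFamily.linearIndependent_cliffordMonomial [Nonempty m]
    (hγ : IsCliffordFamily γ) (hι : Even (Fintype.card ι)) :
    LinearIndependent K (cliffordMonomial γ) :=
  linearIndependent_of_trace_mul_nonsing_inv hγ.isUnit_cliffordMonomial
    fun _ _ => hγ.trace_cliffordMonomial_mul_nonsing_inv hι

theorem IsCliffordFamily.exists_eq_smul_one_of_commute [Nonempty m] (hγ : IsCliffordFamily γ)
    (hι : Even (Fintype.card ι)) (hdim : Fintype.card m ^ 2 = 2 ^ Fintype.card ι)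
    {B : Matrix m m K} (hB : ∀ i, Commute (γ i) B) : ∃ b : K, B = b • 1 := by
  have hspan : Submodule.span K (Set.range (cliffordMonomial γ)) = ⊤ :=
    (hγ.linearIndependent_cliffordMonomial hι).span_eq_top_of_card_eq_finrank
      (by rw [Fintype.card_finset, Module.finrank_matrix, Module.finrank_self, mul_one, ← hdim, sq])
  have hcomm (X : Matrix m m K) : Commute X B := by
    have hX : X ∈ Submodule.span K (Set.range (cliffordMonomial γ)) := hspan ▸ Submodule.mem_top
    induction hX using Submodule.span_induction with
    | mem X hX =>
      obtain ⟨s, rfl⟩ := hX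
      exact Commute.list_prod_left _ _ fun Y hY => by
        obtain ⟨i, -, rfl⟩ := List.mem_map.mp hY
        exact hB i
    | zero => exact Commute.zero_left B
    | add X Y _ _ hX hY => exact hX.add_left hY
    | smul c X _ hX => exact hX.smul_left c
  obtain ⟨b, hb⟩ := mem_range_scalar_of_commute_single fun i j _ => hcomm (single i j 1)
  exact ⟨b, by rw [← hb, scalar_apply, smul_one_eq_diagonal]⟩

variable [Nonempty m] {C : Matrix m m K}

theorem IsCliffordFamily.linearIndependent_sumElim_mul (hγ : IsCliffordFamily γ)
    (hι : Even (Fintype.card ι)) (hC : IsUnit C) :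
    LinearIndependent K
      (Sum.elim (fun i => γ i * C) fun p : {p : ι × ι // p.1 < p.2} => γ p.1.1 * γ p.1.2 * C) := by
  let supp : ι ⊕ {p : ι × ι // p.1 < p.2} → Finset ι :=
    Sum.elim (fun i => {i}) fun p => {p.1.1, p.1.2}
  have hsort : ∀ x, (supp x).sort = Sum.elim (fun i => [i]) (fun p => [p.1.1, p.1.2]) x := by
    rintro (i | ⟨⟨i, j⟩, hij⟩)
    exacts [Finset.sort_singleton _ _, Finset.sort_pair hij]
  have hsupp : Function.Injective supp := by
    intro x y hxy
    have := congrArg (fun s : Finset ι => s.sort) hxy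
    simp only [hsort] at this
    rcases x with i | ⟨⟨i, j⟩, hij⟩ <;> rcases y with i' | ⟨⟨i', j'⟩, hij'⟩ <;> simp_all
  have hmul : Function.Injective fun X : Matrix m m K => X * C := by
    intro X Y hXY
    simpa [mul_assoc, mul_nonsing_inv _ ((isUnit_iff_isUnit_det C).mp hC)] using
      congrArg (· * C⁻¹) hXY
  have hfamily : (Sum.elim (fun i => γ i * C) fun p : {p : ι × ι // p.1 < p.2} =>
      γ p.1.1 * γ p.1.2 * C) = LinearMap.mulRight K C ∘ cliffordMonomial γ ∘ supp := by
    ext1 (i | ⟨⟨i, j⟩, hij⟩)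
    · simp [supp, cliffordMonomial_singleton]
    · simp [supp, cliffordMonomial_pair hij]
  rw [hfamily]
  exact ((hγ.linearIndependent_cliffordMonomial hι).comp supp hsupp).map'
    (LinearMap.mulRight K C) (LinearMap.ker_eq_bot.mpr hmul)

theorem IsCliffordFamily.exists_transpose_eq_smul (hγ : IsCliffordFamily γ)
    (hι : Even (Fintype.card ι)) (hdim : Fintype.card m ^ 2 = 2 ^ Fintype.card ι) (hC : IsUnit C)
    (hconj : ∀ i, C⁻¹ * γ i * C = -(γ i)ᵀ) : ∃ b : K, Cᵀ = b • C := by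
  have hcomm (i : ι) : Commute (γ i) (Cᵀ * C⁻¹) := by
    have hCT : SemiconjBy Cᵀ (-(γ i)ᵀ) (γ i) := by
      have := congrArg transpose (semiconjBy_of_nonsing_inv_mul_mul_eq hC (hconj i)).eq
      simp only [transpose_mul, transpose_neg, transpose_transpose, neg_mul] at this
      rw [SemiconjBy, mul_neg, ← this, neg_neg]
    exact (hCT.mul_left (semiconjBy_nonsing_inv_of_nonsing_inv_mul_mul_eq hC (hconj i))).symm
  obtain ⟨b, hb⟩ := hγ.exists_eq_smul_one_of_commute hι hdim hcomm
  refine ⟨b, ?_⟩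
  simpa [mul_assoc, nonsing_inv_mul _ ((isUnit_iff_isUnit_det C).mp hC)] using
    congrArg (· * C) hb

theorem IsCliffordFamily.card_add_card_le_of_transpose_eq_self [LinearOrder m]
    (hγ : IsCliffordFamily γ) (hι : Even (Fintype.card ι)) (hC : IsUnit C)
    (hconj : ∀ i, C⁻¹ * γ i * C = -(γ i)ᵀ) (hsymm : Cᵀ = C) :
    Fintype.card ι + Fintype.card {p : ι × ι // p.1 < p.2} ≤
      Fintype.card {p : m × m // p.1 < p.2} := by
  have hCγ (i : ι) : C * (γ i)ᵀ = -(γ i * C) := by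
    rw [← neg_eq_iff_eq_neg, ← mul_neg]
    exact semiconjBy_of_nonsing_inv_mul_mul_eq hC (hconj i)
  rw [← Fintype.card_sum]
  refine card_le_of_linearIndependent_of_transpose_eq_neg
    (hγ.linearIndependent_sumElim_mul hι hC) ?_
  rintro (i | ⟨⟨i, j⟩, hij⟩)
  · simp only [Sum.elim_inl, transpose_mul, hsymm, hCγ]
  · rw [Sum.elim_inr, transpose_mul, transpose_mul, hsymm, ← mul_assoc, hCγ, neg_mul, mul_assoc,
      hCγ, mul_neg, neg_neg, ← mul_assoc, hγ.anticomm j i hij.ne', neg_mul]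

theorem IsCliffordFamily.transpose_eq_neg [LinearOrder m] (hγ : IsCliffordFamily γ)
    (hι : Even (Fintype.card ι)) (hdim : Fintype.card m ^ 2 = 2 ^ Fintype.card ι)
    (hcard : Fintype.card {p : m × m // p.1 < p.2} <
      Fintype.card ι + Fintype.card {p : ι × ι // p.1 < p.2})
    (hC : IsUnit C) (hconj : ∀ i, C⁻¹ * γ i * C = -(γ i)ᵀ) : Cᵀ = -C := by
  obtain ⟨b, hb⟩ := hγ.exists_transpose_eq_smul hι hdim hC hconj
  have hb2 : (b - 1) * (b + 1) = 0 := by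
    have htt := congrArg transpose hb
    rw [transpose_transpose, transpose_smul, hb, smul_smul] at htt
    have hzero : (b * b - 1) • C = 0 := by rw [sub_smul, ← htt, one_smul, sub_self]
    linear_combination (smul_eq_zero.mp hzero).resolve_right hC.ne_zero
  rcases mul_eq_zero.mp hb2 with hb1 | hb1
  · have hsymm : Cᵀ = C := by rw [hb, sub_eq_zero.mp hb1, one_smul]
    exact absurd (hγ.card_add_card_le_of_transpose_eq_self hι hC hconj hsymm) hcard.not_ge
  · rw [hb, eq_neg_of_add_eq_zero_left hb1, neg_one_smul]

end Field

open scoped ComplexOrder in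
theorem IsCliffordFamily.mul_conjTranspose_eq_one {𝕜 m ι : Type*} [RCLike 𝕜] [Fintype m]
    [DecidableEq m] [Nonempty m] [LinearOrder ι] [Fintype ι] {γ : ι → Matrix m m 𝕜}
    (hγ : IsCliffordFamily γ) (hι : Even (Fintype.card ι))
    (hdim : Fintype.card m ^ 2 = 2 ^ Fintype.card ι) (hherm : ∀ i, (γ i)ᴴ = γ i)
    {C : Matrix m m 𝕜} (hC : IsUnit C) (hdet : C.det = 1)
    (hconj : ∀ i, C⁻¹ * γ i * C = -(γ i)ᵀ) : C * Cᴴ = 1 := by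
  have hcomm (i : ι) : Commute (γ i) (C * Cᴴ) := by
    have hC' := semiconjBy_of_nonsing_inv_mul_mul_eq hC (hconj i)
    have hCH : SemiconjBy Cᴴ (γ i) (-(γ i)ᵀ) := by
      have := congrArg conjTranspose hC'.eq
      simp only [conjTranspose_mul, conjTranspose_neg,
        conjTranspose_transpose_eq_transpose_conjTranspose, hherm] at this
      exact this.symm
    exact (hC'.mul_left hCH).symm
  obtain ⟨e, he⟩ := hγ.exists_eq_smul_one_of_commute hι hdim hcomm
  obtain ⟨i⟩ := ‹Nonempty m›
  have he_nonneg : 0 ≤ e := by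
    simpa [he] using (posSemidef_self_mul_conjTranspose C).diag_nonneg (i := i)
  obtain ⟨r, hr, rfl⟩ := RCLike.nonneg_iff_exists_ofReal.mp he_nonneg
  have hpow : r ^ Fintype.card m = 1 := by
    have := congrArg det he
    rw [det_mul, det_conjTranspose, hdet, star_one, mul_one, det_smul, det_one, mul_one] at this
    exact_mod_cast this.symm
  rw [he, (pow_eq_one_iff_of_nonneg hr Fintype.card_ne_zero).mp hpow, RCLike.ofReal_one, one_smul]

theorem stmt0_general (γ : Fin 4 → Matrix (Fin 4) (Fin 4) ℂ)
    (hcliff : ∀ μ ν, γ μ * γ ν + γ ν * γ μ = (if μ = ν then (2 : ℂ) else 0) • 1)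
    (hherm : ∀ μ, (γ μ)ᴴ = γ μ)
    (C : Matrix (Fin 4) (Fin 4) ℂ) (hdet : C.det = 1)
    (hconj : ∀ μ, C⁻¹ * γ μ * C = -(γ μ)ᵀ) :
    Cᵀ = -C ∧ Cᴴ = C⁻¹ := by
  have hγ : IsCliffordFamily γ := .of_anticommutator hcliff
  have hC : IsUnit C := (isUnit_iff_isUnit_det C).mpr (hdet ▸ isUnit_one)
  have hι : Even (Fintype.card (Fin 4)) := by decide
  have hdim : Fintype.card (Fin 4) ^ 2 = 2 ^ Fintype.card (Fin 4) := rfl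
  refine ⟨hγ.transpose_eq_neg hι hdim (by decide) hC hconj, ?_⟩
  exact (inv_eq_right_inv (hγ.mul_conjTranspose_eq_one hι hdim hherm hC hdet hconj)).symm

/-- If `C` is an invertible complex 4×4 matrix with determinant 1 satisfying
`C⁻¹ γ_μ C = -γ_μᵀ` for Euclidean gamma matrices, then `Cᵀ = -C` and `Cᴴ = C⁻¹`. -/
theorem stmt0 (γ : Fin 4 → Matrix (Fin 4) (Fin 4) ℂ)
    (hcliff : ∀ μ ν, γ μ * γ ν + γ ν * γ μ = (if μ = ν then (2 : ℂ) else 0) • 1)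
    (hherm : ∀ μ, (γ μ)ᴴ = γ μ)
    (C : Matrix (Fin 4) (Fin 4) ℂ) (hC : IsUnit C) (hdet : C.det = 1)
    (hconj : ∀ μ, C⁻¹ * γ μ * C = -(γ μ)ᵀ) :
    Cᵀ = -C ∧ Cᴴ = C⁻¹ :=
  stmt0_general γ hcliff hherm C hdet hconj
end

section
/- Let α : ℝ⁴ → ℝ be a smooth function such that ∂_μ α(x + L e_i) = -∂_μ α(x) for each spatial unit vector e_i (i = 1,2,3) and all μ. Then there exists a constant c ∈ ℝ and a function β : ℝ⁴ → ℝ with β(x + L e_i) = -β(x) for all i, such that α(x) = β(x) + c for all x. -/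
/-- If `α : ℝ⁴ → ℝ` is smooth and all its partial derivatives are anti-periodic (period `L`)
in the three spatial directions, then `α` is the sum of a spatially anti-periodic function
and a constant. -/
theorem stmt1 (L : ℝ) (hL : 0 < L) (α : (Fin 4 → ℝ) → ℝ)
    (hα : ContDiff ℝ (⊤ : ℕ∞) α)
    (hanti : ∀ (x : Fin 4 → ℝ) (i : Fin 3),
      fderiv ℝ α (x + L • (Pi.single i.succ 1 : Fin 4 → ℝ)) = -fderiv ℝ α x) :
    ∃ (c : ℝ) (β : (Fin 4 → ℝ) → ℝ),
      (∀ (x : Fin 4 → ℝ) (i : Fin 3), β (x + L • (Pi.single i.succ 1 : Fin 4 → ℝ)) = -β x) ∧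
      ∀ x, α x = β x + c := by
  have hdiff : Differentiable ℝ α := hα.differentiable (by simp)
  have key : ∀ (i : Fin 3) (x : Fin 4 → ℝ),
      α (x + L • (Pi.single i.succ 1 : Fin 4 → ℝ)) + α x
        = α (L • (Pi.single i.succ 1 : Fin 4 → ℝ)) + α 0 := by
    intro i x
    set v := L • (Pi.single i.succ 1 : Fin 4 → ℝ) with hv
    have hshift : ∀ y : Fin 4 → ℝ,
        HasFDerivAt (fun x => α (x + v)) (fderiv ℝ α (y + v)) y := by
      intro y
      have h := ((hdiff (y + v)).hasFDerivAt).comp y ((hasFDerivAt_id y).add_const v)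
      exact h
    have hg : Differentiable ℝ (fun x => α (x + v) + α x) :=
      fun y => (((hshift y).add (hdiff y).hasFDerivAt)).differentiableAt
    have h0 : ∀ y, fderiv ℝ (fun x => α (x + v) + α x) y = 0 := by
      intro y
      have h := ((hshift y).add (hdiff y).hasFDerivAt).fderiv
      rw [show (fun x => α (x + v) + α x) = (fun x => α (x + v)) + α from rfl, h, hanti y i, neg_add_cancel]
    have := is_const_of_fderiv_eq_zero hg h0 x 0
    simpa using this
  have hCeq : ∀ i : Fin 3,
      α (L • (Pi.single i.succ 1 : Fin 4 → ℝ)) + α 0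
        = α (L • (Pi.single (0 : Fin 3).succ 1 : Fin 4 → ℝ)) + α 0 := by
    intro i
    have h1 := key i (L • (Pi.single (0 : Fin 3).succ 1 : Fin 4 → ℝ))
    have h2 := key 0 (L • (Pi.single i.succ 1 : Fin 4 → ℝ))
    have h3 := congrArg α
      (add_comm (L • (Pi.single (0 : Fin 3).succ 1 : Fin 4 → ℝ))
        (L • (Pi.single i.succ 1 : Fin 4 → ℝ)))
    linarith
  set c := (α (L • (Pi.single (0 : Fin 3).succ 1 : Fin 4 → ℝ)) + α 0) / 2 with hc
  refine ⟨c, fun x => α x - c, ?_, ?_⟩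
  · intro x i
    have h1 := key i x
    have h2 := hCeq i
    simp only
    linarith
  · intro x
    ring
end

section
/- Let α : ℝ⁴ → ℝ be smooth with ∂_μ α anti-periodic in all three spatial directions (period L), and suppose that for a fixed rational charge q ≠ 0 the function e^{iqα} is periodic in all spatial directions. If additionally e^{iq'α} is required periodic for all charges q' in a set S = {n q_el : n ∈ ℤ} of integer multiples of an elementary charge q_el containing q, then α(x) = β(x) + nπ/q_el for some integer n and some spatially anti-periodic function β. -/
lemma half_ne_int (k a : ℤ) : (k : ℝ) ≠ (a : ℝ) + 1/2 := by
  intro h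
  have h2 : ((2*k : ℤ) : ℝ) = ((2*a+1 : ℤ) : ℝ) := by push_cast; linarith
  have := Int.cast_injective h2
  omega

lemma aux_const {f : (Fin 4 → ℝ) → ℝ} (hf : Continuous f)
    (h : ∀ x, ∃ k : ℤ, f x = k) (x y : Fin 4 → ℝ) : f x = f y := by
  by_contra hne
  obtain ⟨a, ha⟩ := h x
  obtain ⟨b, hb⟩ := h y
  set g : ℝ → ℝ := fun t => f (x + t • (y - x)) with hgdef
  have hgc : Continuous g :=
    hf.comp (continuous_const.add (continuous_id.smul continuous_const))
  have hg0 : g 0 = f x := by simp [hgdef]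
  have hg1 : g 1 = f y := by simp [hgdef]
  have hab : a ≠ b := by rintro rfl; exact hne (ha.trans hb.symm)
  rcases hab.lt_or_gt with hlt | hlt
  · have hmem : (a:ℝ) + 1/2 ∈ Set.Icc (g 0) (g 1) := by
      rw [hg0, hg1, ha, hb]
      have : (a:ℝ) + 1 ≤ b := by exact_mod_cast Int.add_one_le_iff.mpr hlt
      constructor <;> linarith
    obtain ⟨t, -, ht⟩ := intermediate_value_Icc zero_le_one hgc.continuousOn hmem
    obtain ⟨k, hk⟩ := h (x + t • (y - x))
    exact half_ne_int k a (by rw [← hk]; exact ht.symm ▸ rfl)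
  · have hmem : (b:ℝ) + 1/2 ∈ Set.Icc (g 1) (g 0) := by
      rw [hg0, hg1, ha, hb]
      have : (b:ℝ) + 1 ≤ a := by exact_mod_cast Int.add_one_le_iff.mpr hlt
      constructor <;> linarith
    obtain ⟨t, -, ht⟩ := intermediate_value_Icc' zero_le_one hgc.continuousOn hmem
    obtain ⟨k, hk⟩ := h (x + t • (y - x))
    exact half_ne_int k b (by rw [← hk]; exact ht.symm ▸ rfl)



/-- If `α` is smooth with spatially anti-periodic gradient, `q = m q_el ≠ 0` is a rational
(integer multiple) charge such that `e^{iqα}` is periodic, and `e^{iq'α}` is periodic for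
every integer multiple `q' = n q_el` of the elementary charge (i.e. the C* gauge-consistency
condition `e^{iq'(α(x+Le_i)+α(x))} = 1` holds), then `α(x) = β(x) + nπ/q_el` for some
integer `n` and some spatially anti-periodic `β`. -/
theorem stmt2 (L : ℝ) (hL : 0 < L) (qel q : ℝ) (hqel : qel ≠ 0) (hq : q ≠ 0)
    (m : ℤ) (hm : q = (m : ℝ) * qel)
    (α : (Fin 4 → ℝ) → ℝ) (hα : ContDiff ℝ (⊤ : ℕ∞) α)
    (hanti : ∀ (x : Fin 4 → ℝ) (i : Fin 3),
      fderiv ℝ α (x + L • (Pi.single i.succ 1 : Fin 4 → ℝ)) = -fderiv ℝ α x)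
    (hqper : ∀ (x : Fin 4 → ℝ) (i : Fin 3),
      Complex.exp (Complex.I * (q : ℂ) *
          ((α (x + L • (Pi.single i.succ 1 : Fin 4 → ℝ)) : ℝ) : ℂ)) =
        Complex.exp (Complex.I * (q : ℂ) * ((α x : ℝ) : ℂ)))
    (hper : ∀ (n : ℤ) (x : Fin 4 → ℝ) (i : Fin 3),
      Complex.exp (Complex.I * (((n : ℝ) * qel : ℝ) : ℂ) *
        ((α (x + L • (Pi.single i.succ 1 : Fin 4 → ℝ)) + α x : ℝ) : ℂ)) = 1) :
    ∃ (n : ℤ) (β : (Fin 4 → ℝ) → ℝ),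
      (∀ (x : Fin 4 → ℝ) (i : Fin 3),
        β (x + L • (Pi.single i.succ 1 : Fin 4 → ℝ)) = -β x) ∧
      ∀ x, α x = β x + (n : ℝ) * Real.pi / qel := by
  have hπ : (0:ℝ) < Real.pi := Real.pi_pos
  set F : Fin 3 → (Fin 4 → ℝ) → ℝ :=
    fun i x => α (x + L • (Pi.single i.succ 1 : Fin 4 → ℝ)) + α x with hF
  -- every value of qel * F i is in 2πℤ
  have key : ∀ (i : Fin 3) (x : Fin 4 → ℝ), ∃ k : ℤ, qel * F i x = 2 * Real.pi * k := by
    intro i x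
    have h := hper 1 x i
    rw [Complex.exp_eq_one_iff] at h
    obtain ⟨k, hk⟩ := h
    refine ⟨k, ?_⟩
    have h2 := congrArg Complex.im hk
    simp [Complex.mul_im, Complex.mul_re] at h2
    simp only [hF]
    push_cast at h2 ⊢
    linarith
  -- F i is constant
  have hcont : ∀ i : Fin 3, Continuous (F i) := by
    intro i
    exact (hα.continuous.comp (continuous_id.add continuous_const)).add hα.continuous
  have hconst : ∀ (i : Fin 3) (x : Fin 4 → ℝ), F i x = F i 0 := by
    intro i x
    have h := aux_const (f := fun x => qel * F i x / (2 * Real.pi))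
      (by exact (continuous_const.mul (hcont i)).div_const _)
      (by intro x
          obtain ⟨k, hk⟩ := key i x
          refine ⟨k, ?_⟩
          show qel * F i x / (2 * Real.pi) = (k:ℝ)
          rw [hk]; field_simp) x 0
    have h2π : (2 * Real.pi) ≠ 0 := by positivity
    field_simp at h
    exact h
  -- the constants agree for different i
  have hsame : ∀ i j : Fin 3, F i 0 = F j 0 := by
    intro i j
    have e1 := hconst i ((0:Fin 4 → ℝ) + L • (Pi.single j.succ 1 : Fin 4 → ℝ))
    have e2 := hconst j ((0:Fin 4 → ℝ) + L • (Pi.single i.succ 1 : Fin 4 → ℝ))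
    have ecomm : ((0:Fin 4 → ℝ) + L • (Pi.single j.succ 1 : Fin 4 → ℝ))
        + L • (Pi.single i.succ 1 : Fin 4 → ℝ)
        = ((0:Fin 4 → ℝ) + L • (Pi.single i.succ 1 : Fin 4 → ℝ))
        + L • (Pi.single j.succ 1 : Fin 4 → ℝ) := by
      abel
    simp only [hF] at e1 e2 ⊢
    rw [ecomm] at e1
    linarith
  obtain ⟨n, hn⟩ := key 0 0
  refine ⟨n, fun x => α x - (n : ℝ) * Real.pi / qel, ?_, fun x => by ring⟩
  intro x i
  have h1 : F i x = F 0 0 := (hconst i x).trans (hsame i 0)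
  have h2 : F i x = 2 * Real.pi * n / qel := by
    rw [h1]
    field_simp at hn ⊢
    linarith [hn]
  simp only [hF] at h2
  field_simp at h2 ⊢
  linarith [h2]
end

section
/- The set of gauge-equivalence classes of minima of the U(1) Wilson action with C* boundary conditions in the spatial directions and periodic boundary in time is in bijection with Ω = {(z₀,z₁,z₂,1) : z₀² = z₁² = z₂² = 1}, with representative configurations Ū_z(x,μ) = z_μ if x_μ = L_μ−1 and 1 otherwise; uniqueness of z follows from gauge invariance of the Wilson line W(μ) = ∏_{s=0}^{L_μ−1} U(s e_μ, μ) along periodic directions μ and of the combination W(μ)W(3)⁻¹ along C*-directions μ ≠ 3. -/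
/-!
Write `U = exp (i A)` with phases `A` in the additive group `Additive Circle`. A minimum of the
Wilson action is a flat connection, so `A = dg` for a potential `g`, obtained by summing `A`
along staircase paths; a gauge transformation `Λ` replaces `g` by `g - Λ`. By the boundary
conditions, shifting by `L_μ e_μ` turns `g` into `± g + c_μ` (`+` in the periodic direction 0,
`-` in the C* directions), and performing two such shifts in either order forces
`2 c₀ = 0` and `2 (c_μ - c₃) = 0`. These are the labels `z`: the representative `Ū_z` has
potential `∑_ν ⌊x_ν / L_ν⌋ z_ν`, and the gauge transformation is that potential minus `g`, plus a
constant `w` with `2 w = c₃`. Conversely, for any representation the Wilson lines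
`W_μ = g (L_μ e_μ) - g 0` equal `z₀` for `μ = 0` and `z_μ + 2 Λ(0)` otherwise, so `W₀` and
`W_μ - W₃` determine `z`.
-/

open Finset Function

section LinePrimitive

variable {G : Type*} [AddCommGroup G]

/-- One of the two intervals is always empty: this is the discrete primitive of `u` that vanishes
at `0`. -/
noncomputable def linePrimitive (u : ℤ → G) (n : ℤ) : G :=
  ∑ s ∈ Ico 0 n, u s - ∑ s ∈ Ico n 0, u s

theorem linePrimitive_zero (u : ℤ → G) : linePrimitive u 0 = 0 := by
  simp [linePrimitive]

theorem linePrimitive_add_one (u : ℤ → G) (n : ℤ) :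
    linePrimitive u (n + 1) = linePrimitive u n + u n := by
  rcases le_or_gt 0 n with hn | hn
  · have hI : Ico 0 (n + 1) = insert n (Ico 0 n) := by
      rw [← Order.succ_eq_add_one, insert_Ico_right_eq_Ico_succ hn]
    rw [linePrimitive, linePrimitive, hI, sum_insert (by simp), Ico_eq_empty_of_le hn,
      Ico_eq_empty_of_le (show (0 : ℤ) ≤ n + 1 by omega)]
    abel
  · have hI : Ico n 0 = insert n (Ico (n + 1) 0) := by
      rw [← Order.succ_eq_add_one, insert_Ico_succ_left_eq_Ico hn]
    rw [linePrimitive, linePrimitive, hI, sum_insert (by simp), Ico_eq_empty_of_le hn.le,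
      Ico_eq_empty_of_le (show n + 1 ≤ 0 by omega)]
    abel

theorem eq_of_add_one_eq_add {F F' : ℤ → G} (u : ℤ → G) (h0 : F 0 = F' 0)
    (hF : ∀ n, F (n + 1) = F n + u n) (hF' : ∀ n, F' (n + 1) = F' n + u n) : F = F' := by
  funext n
  induction n using Int.induction_on with
  | zero => exact h0
  | succ k ih => rw [hF, hF', ih]
  | pred k ih =>
    have h := hF (-k - 1)
    have h' := hF' (-k - 1)
    rw [sub_add_cancel] at h h'
    rw [← add_right_cancel_iff (a := u (-k - 1)), ← h, ← h', ih]

end LinePrimitive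

section Potential

variable {ι G : Type*} [DecidableEq ι] [AddCommGroup G]

theorem Function.Periodic.of_forall_single [Finite ι] {α : Type*} {F : (ι → ℤ) → α}
    (hF : ∀ μ, Periodic F (Pi.single μ 1)) (v : ι → ℤ) : Periodic F v := by
  induction v using Pi.single_induction with
  | zero => simp [Periodic]
  | add v w hv hw => exact hv.add_period hw
  | single μ m => simpa [← Pi.single_smul] using (hF μ).zsmul m

def IsFlat (A : (ι → ℤ) → ι → G) : Prop :=
  ∀ x μ ν, A x μ + A (x + Pi.single μ 1) ν = A x ν + A (x + Pi.single ν 1) μ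

def IsPotential (A : (ι → ℤ) → ι → G) (g : (ι → ℤ) → G) : Prop :=
  ∀ x μ, g (x + Pi.single μ 1) = g x + A x μ

variable {A : (ι → ℤ) → ι → G} {g : (ι → ℤ) → G}

theorem IsPotential.add_const (hg : IsPotential A g) (c : G) :
    IsPotential A (fun x => g x + c) := fun x μ => by
  simp only [hg x μ, add_right_comm]

theorem IsPotential.map {H : Type*} [AddCommGroup H] (hg : IsPotential A g) (φ : G →+ H) :
    IsPotential (fun x μ => φ (A x μ)) (fun x => φ (g x)) := fun x μ => by
  simp only [hg x μ, map_add]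

theorem IsPotential.comp_add_right (hg : IsPotential A g) (v : ι → ℤ) :
    IsPotential (fun x μ => A (x + v) μ) (fun x => g (x + v)) := fun x μ => by
  simp only [add_right_comm x, hg _ μ]

theorem IsPotential.exists_eq_add_const [Finite ι] {g' : (ι → ℤ) → G} (hg : IsPotential A g)
    (hg' : IsPotential A g') : ∃ c, ∀ x, g' x = g x + c := by
  have hper : ∀ v, Periodic (fun x => g' x - g x) v :=
    Periodic.of_forall_single fun μ x => by simp only [hg x μ, hg' x μ, add_sub_add_right_eq_sub]
  refine ⟨g' 0 - g 0, fun x => ?_⟩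
  have h := hper x 0
  simp only [zero_add] at h
  rw [← h]
  abel

theorem IsPotential.exists_add_eq_map_add [Finite ι] (hg : IsPotential A g) (φ : G →+ G)
    {v : ι → ℤ} (hA : ∀ x μ, A (x + v) μ = φ (A x μ)) : ∃ c, ∀ x, g (x + v) = φ (g x) + c := by
  have hgv := hg.comp_add_right v
  simp only [hA] at hgv
  exact (hg.map φ).exists_eq_add_const hgv

theorem IsFlat.linePrimitive_add_single (hA : IsFlat A) (y : ι → ℤ) (a ν : ι) (n : ℤ) :
    linePrimitive (fun t => A (y + Pi.single ν 1 + t • Pi.single a 1) a) n =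
      linePrimitive (fun t => A (y + t • Pi.single a 1) a) n + A (y + n • Pi.single a 1) ν
        - A y ν := by
  revert n
  rw [← funext_iff]
  refine eq_of_add_one_eq_add (fun t => A (y + Pi.single ν 1 + t • Pi.single a 1) a) ?_
    (fun _ => linePrimitive_add_one _ _) fun n => ?_
  · simp [linePrimitive_zero]
  · have h := hA (y + n • Pi.single a 1) a ν
    rw [add_assoc, ← add_one_zsmul, add_right_comm y] at h
    rw [linePrimitive_add_one]
    linear_combination (norm := abel) h

theorem IsFlat.exists_isPotential [Finite ι] (hA : IsFlat A) : ∃ g, IsPotential A g := by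
  cases nonempty_fintype ι
  suffices ∀ s : Finset ι, ∃ g : (ι → ℤ) → G, ∀ x, ∀ μ ∈ s, g (x + Pi.single μ 1) = g x + A x μ by
    obtain ⟨g, hg⟩ := this univ
    exact ⟨g, fun x μ => hg x μ (mem_univ μ)⟩
  intro s
  induction s using Finset.induction_on with
  | empty => exact ⟨0, by simp⟩
  | insert a s has ih =>
    obtain ⟨g, hg⟩ := ih
    -- extend `g` from the hyperplane `x a = 0` along the lines in direction `a`
    let π : (ι → ℤ) → ι → ℤ := fun x => x - x a • Pi.single a 1
    refine ⟨fun x => g (π x) + linePrimitive (fun t => A (π x + t • Pi.single a 1) a) (x a), ?_⟩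
    intro x μ hμ
    beta_reduce
    have hx : π x + x a • Pi.single a 1 = x := sub_add_cancel _ _
    rcases mem_insert.1 hμ with rfl | hμs
    · have hxμ : (x + Pi.single μ 1 : ι → ℤ) μ = x μ + 1 := by simp
      have hπ : π (x + Pi.single μ 1) = π x := by
        simp only [π, hxμ, add_zsmul, one_smul]; abel
      rw [hπ, hxμ, linePrimitive_add_one, hx, add_assoc]
    · have hμa : μ ≠ a := fun h => has (h ▸ hμs)
      have hxa : (x + Pi.single μ 1 : ι → ℤ) a = x a := by simp [hμa.symm]
      have hπ : π (x + Pi.single μ 1) = π x + Pi.single μ 1 := by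
        simp only [π, hxa]; abel
      rw [hπ, hxa, hg _ μ hμs, hA.linePrimitive_add_single, hx]
      abel

theorem isPotential_sub_iff {V : (ι → ℤ) → ι → G} {h : (ι → ℤ) → G} (hh : IsPotential V h)
    (Λ : (ι → ℤ) → G) :
    IsPotential A (fun x => h x - Λ x) ↔
      ∀ x μ, A x μ = Λ x + V x μ - Λ (x + Pi.single μ 1) := by
  refine forall₂_congr fun x μ => ?_
  simp only [hh x μ]
  constructor <;> intro H <;> linear_combination (norm := abel) -H

end Potential

theorem Int.add_one_ediv_eq {L : ℤ} (hL : 0 < L) (x : ℤ) :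
    (x + 1) / L = x / L + if x % L = L - 1 then 1 else 0 := by
  have hx : x + 1 = (x % L + 1) + x / L * L := by linarith [Int.mul_ediv_add_emod x L]
  rw [hx, Int.add_mul_ediv_right _ _ hL.ne', add_comm]
  congr 1
  split_ifs with h
  · rw [h, sub_add_cancel, Int.ediv_self hL.ne']
  · have := Int.emod_nonneg x hL.ne'
    have := Int.emod_lt_of_pos x hL
    exact Int.ediv_eq_zero_of_lt (by omega) (by omega)

section Vacuum

variable {ι G : Type*} [Fintype ι] [AddCommGroup G] (L : ι → ℤ) (z : ι → G)

/-- The representative `Ū_z` of the vacuum labelled by `z`. -/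
def vacuumField (x : ι → ℤ) (μ : ι) : G :=
  if x μ % L μ = L μ - 1 then z μ else 0

def vacuumPotential (x : ι → ℤ) : G :=
  ∑ ν, (x ν / L ν) • z ν

theorem vacuumPotential_zero : vacuumPotential L z 0 = 0 := by
  simp [vacuumPotential]

theorem vacuumPotential_add_single [DecidableEq ι] (x : ι → ℤ) (μ : ι) (m : ℤ) :
    vacuumPotential L z (x + Pi.single μ m) =
      vacuumPotential L z x + ((x μ + m) / L μ - x μ / L μ) • z μ := by
  rw [vacuumPotential, vacuumPotential, ← sub_eq_iff_eq_add', ← sum_sub_distrib,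
    Fintype.sum_eq_single μ fun ν hν => by simp [hν]]
  simp [sub_smul]

variable {L}

theorem isPotential_vacuumPotential [DecidableEq ι] (hL : ∀ μ, 0 < L μ) :
    IsPotential (vacuumField L z) (vacuumPotential L z) := fun x μ => by
  rw [vacuumPotential_add_single, Int.add_one_ediv_eq (hL μ), vacuumField]
  split_ifs <;> simp

theorem vacuumPotential_add_period [DecidableEq ι] {μ : ι} (hL : 0 < L μ) (x : ι → ℤ) :
    vacuumPotential L z (x + L μ • Pi.single μ 1) = vacuumPotential L z x + z μ := by
  rw [← Pi.single_smul', smul_eq_mul, mul_one, vacuumPotential_add_single,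
    Int.add_ediv_of_dvd_right dvd_rfl, Int.ediv_self hL.ne', add_sub_cancel_left, one_smul]

variable {z}

theorem two_nsmul_vacuumPotential (hz : ∀ μ, 2 • z μ = 0) (x : ι → ℤ) :
    2 • vacuumPotential L z x = 0 := by
  simp [vacuumPotential, smul_sum, smul_comm 2, hz]

end Vacuum

theorem twisted_periods_consistent {M G : Type*} [AddCommMonoid M] [AddCommGroup G] {g : M → G}
    {v w : M} {φ ψ : G →+ G} {c d : G} (hv : ∀ x, g (x + v) = φ (g x) + c)
    (hw : ∀ x, g (x + w) = ψ (g x) + d) (hφψ : ∀ a, φ (ψ a) = ψ (φ a)) :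
    φ d + c = ψ c + d := by
  have h := congrArg g (add_right_comm (0 : M) w v)
  rw [hv, hw, hw, hv, map_add, map_add, hφψ] at h
  linear_combination (norm := abel) h

section CStar

variable {G : Type*} [AddCommGroup G]

/-- Complex conjugation of a link variable is negation of its phase. -/
def cstarTwist (μ : Fin 4) : G →+ G :=
  if μ = 0 then AddMonoidHom.id G else -AddMonoidHom.id G

theorem cstarTwist_zero (a : G) : cstarTwist 0 a = a := by
  simp [cstarTwist]

theorem cstarTwist_of_ne_zero {μ : Fin 4} (hμ : μ ≠ 0) (a : G) : cstarTwist μ a = -a := by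
  simp [cstarTwist, hμ]

theorem cstarTwist_comm (μ ν : Fin 4) (a : G) :
    cstarTwist μ (cstarTwist ν a) = cstarTwist ν (cstarTwist μ a) := by
  unfold cstarTwist
  split_ifs <;> simp

/-- For a potential `g` of `A`, this is the Wilson line `∑_{s < L μ} A (s e_μ) μ`. -/
def wilsonLine (L : Fin 4 → ℤ) (g : (Fin 4 → ℤ) → G) (μ : Fin 4) : G :=
  g (L μ • Pi.single μ 1) - g 0

def cstarLabel (W : Fin 4 → G) : Fin 4 → G :=
  fun μ => if μ = 0 then W 0 else W μ - W 3

def IsCStarVacuumGauge (L : Fin 4 → ℤ) (A : (Fin 4 → ℤ) → Fin 4 → G) (z : Fin 4 → G)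
    (Λ : (Fin 4 → ℤ) → G) : Prop :=
  (∀ x μ, Λ (x + L μ • Pi.single μ 1) = cstarTwist μ (Λ x)) ∧
    ∀ x μ, A x μ = Λ x + vacuumField L z x μ - Λ (x + Pi.single μ 1)

variable {L : Fin 4 → ℤ} {A : (Fin 4 → ℤ) → Fin 4 → G} {g : (Fin 4 → ℤ) → G}

theorem IsCStarVacuumGauge.eq_cstarLabel {z : Fin 4 → G} {Λ : (Fin 4 → ℤ) → G}
    (h : IsCStarVacuumGauge L A z Λ) (hL : ∀ μ, 0 < L μ) (hg : IsPotential A g) (hz3 : z 3 = 0) :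
    z = cstarLabel (wilsonLine L g) := by
  obtain ⟨c, hc⟩ := hg.exists_eq_add_const
    ((isPotential_sub_iff (isPotential_vacuumPotential z hL) Λ).2 h.2)
  have hW : ∀ μ, wilsonLine L g μ = z μ + Λ 0 - cstarTwist μ (Λ 0) := by
    intro μ
    have h0 := hc 0
    have hμ := hc (0 + L μ • Pi.single μ 1)
    rw [vacuumPotential_add_period z (hL μ), h.1, vacuumPotential_zero, zero_add, zero_add] at hμ
    rw [vacuumPotential_zero] at h0
    rw [wilsonLine]
    linear_combination (norm := abel) h0 - hμ
  funext μ
  rcases eq_or_ne μ 0 with rfl | hμ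
  · simp [cstarLabel, hW, cstarTwist_zero]
  · simp only [cstarLabel, if_neg hμ, hW, cstarTwist_of_ne_zero hμ,
      cstarTwist_of_ne_zero (by decide : (3 : Fin 4) ≠ 0), hz3]
    abel

theorem IsPotential.exists_cstarVacuumGauge (hg : IsPotential A g) (h2 : ∀ c : G, ∃ w, 2 • w = c)
    (hL : ∀ μ, 0 < L μ)
    (hbc : ∀ x μ ρ, A (x + L μ • Pi.single μ 1) ρ = cstarTwist μ (A x ρ)) :
    ∃ z : Fin 4 → G, (z 3 = 0 ∧ ∀ μ, 2 • z μ = 0) ∧ ∃ Λ, IsCStarVacuumGauge L A z Λ := by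
  choose c hc using fun μ => hg.exists_add_eq_map_add (cstarTwist μ) (hbc · μ)
  have h3 : (3 : Fin 4) ≠ 0 := by decide
  have hc3 : ∀ μ, cstarTwist μ (c 3) + c μ = cstarTwist 3 (c μ) + c 3 := fun μ =>
    twisted_periods_consistent (hc μ) (hc 3) (cstarTwist_comm μ 3)
  obtain ⟨w, hw⟩ := h2 (c 3)
  set z := cstarLabel c
  have hz3 : z 3 = 0 := by simp [z, cstarLabel, h3]
  have hz : ∀ μ, 2 • z μ = 0 := by
    intro μ
    have h := hc3 μ
    rcases eq_or_ne μ 0 with rfl | hμ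
    · simp only [cstarTwist_zero, cstarTwist_of_ne_zero h3] at h
      simp only [z, cstarLabel, if_pos]
      linear_combination (norm := abel) h
    · simp only [cstarTwist_of_ne_zero hμ, cstarTwist_of_ne_zero h3] at h
      simp only [z, cstarLabel, if_neg hμ]
      linear_combination (norm := abel) h
  refine ⟨z, ⟨hz3, hz⟩, fun x => vacuumPotential L z x - g x + w, fun x μ => ?_, ?_⟩
  · beta_reduce
    rw [vacuumPotential_add_period z (hL μ), hc μ]
    rcases eq_or_ne μ 0 with rfl | hμ
    · simp only [cstarTwist_zero, z, cstarLabel, if_pos]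
      abel
    · simp only [cstarTwist_of_ne_zero hμ, z, cstarLabel, if_neg hμ]
      linear_combination (norm := abel) two_nsmul_vacuumPotential hz x + hw
  · refine (isPotential_sub_iff (isPotential_vacuumPotential z hL) _).1 ?_
    convert hg.add_const (-w) using 2
    abel

theorem existsUnique_cstarVacuumGauge (h2 : ∀ c : G, ∃ w, 2 • w = c) (hL : ∀ μ, 0 < L μ)
    (hA : IsFlat A) (hbc : ∀ x μ ρ, A (x + L μ • Pi.single μ 1) ρ = cstarTwist μ (A x ρ)) :
    ∃! z : Fin 4 → G, (z 3 = 0 ∧ ∀ μ, 2 • z μ = 0) ∧ ∃ Λ, IsCStarVacuumGauge L A z Λ := by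
  obtain ⟨g, hg⟩ := hA.exists_isPotential
  refine existsUnique_of_exists_of_unique (hg.exists_cstarVacuumGauge h2 hL hbc) ?_
  rintro z z' ⟨⟨hz3, -⟩, Λ, hΛ⟩ ⟨⟨hz3', -⟩, Λ', hΛ'⟩
  rw [hΛ.eq_cstarLabel hL hg hz3, hΛ'.eq_cstarLabel hL hg hz3']

end CStar

theorem ExistsUnique.image {α β : Type*} {p : α → Prop} (h : ∃! a, p a) (f : α → β) :
    ∃! b, ∃ a, p a ∧ f a = b := by
  obtain ⟨a, ha, hu⟩ := h
  refine ⟨f a, ⟨a, ha, rfl⟩, ?_⟩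
  rintro _ ⟨a', ha', rfl⟩
  rw [hu a' ha']

section Phase

open ComplexConjugate

def phase (θ : Additive Circle) : ℂ := θ.toMul

theorem phase_injective : Injective phase :=
  Circle.coe_injective.comp Additive.toMul.injective

theorem norm_phase (θ : Additive Circle) : ‖phase θ‖ = 1 := Circle.norm_coe _

theorem phase_zero : phase 0 = 1 := rfl

theorem phase_add (θ η : Additive Circle) : phase (θ + η) = phase θ * phase η := rfl

theorem phase_neg (θ : Additive Circle) : phase (-θ) = (phase θ)⁻¹ := rfl

theorem phase_nsmul (n : ℕ) (θ : Additive Circle) : phase (n • θ) = phase θ ^ n := rfl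

theorem exists_phase_eq {a : ℂ} (ha : ‖a‖ = 1) : ∃ θ, phase θ = a :=
  ⟨Additive.ofMul ⟨a, mem_sphere_zero_iff_norm.2 ha⟩, rfl⟩

theorem exists_two_nsmul_eq (θ : Additive Circle) : ∃ η, 2 • η = θ := by
  refine ⟨Additive.ofMul (Circle.exp (Complex.arg (θ.toMul : ℂ) / 2)), ?_⟩
  rw [← ofMul_pow, ← Circle.exp_nsmul, nsmul_eq_mul, Nat.cast_two, mul_div_cancel₀ _ two_ne_zero,
    Circle.exp_arg, ofMul_toMul]

theorem phase_cstarTwist (μ : Fin 4) (θ : Additive Circle) :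
    phase (cstarTwist μ θ) = if μ = 0 then phase θ else conj (phase θ) := by
  split_ifs with hμ
  · rw [hμ, cstarTwist_zero]
  · rw [cstarTwist_of_ne_zero hμ]
    exact Circle.coe_inv_eq_conj _

theorem phase_vacuumField (L : Fin 4 → ℤ) (z : Fin 4 → Additive Circle) (x : Fin 4 → ℤ)
    (μ : Fin 4) :
    phase (vacuumField L z x μ) = if x μ % L μ = L μ - 1 then phase (z μ) else 1 := by
  unfold vacuumField
  split_ifs <;> rfl

theorem isCStarVacuumGauge_iff_phase {L : Fin 4 → ℤ} {A : (Fin 4 → ℤ) → Fin 4 → Additive Circle}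
    {z : Fin 4 → Additive Circle} {Λ : (Fin 4 → ℤ) → Additive Circle} :
    IsCStarVacuumGauge L A z Λ ↔
      (∀ x μ, phase (Λ (x + L μ • Pi.single μ 1)) =
        if μ = 0 then phase (Λ x) else conj (phase (Λ x))) ∧
      ∀ x μ, phase (A x μ) = phase (Λ x) * (if x μ % L μ = L μ - 1 then phase (z μ) else 1) *
        (phase (Λ (x + Pi.single μ 1)))⁻¹ := by
  refine and_congr (forall₂_congr fun x μ => ?_) (forall₂_congr fun x μ => ?_)
  · rw [← phase_cstarTwist, phase_injective.eq_iff]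
  · rw [← phase_vacuumField, ← phase_neg, ← phase_add, ← phase_add, phase_injective.eq_iff,
      sub_eq_add_neg]

theorem cstarVacuumLabel_phase_iff {L : Fin 4 → ℤ} {A : (Fin 4 → ℤ) → Fin 4 → Additive Circle}
    (z : Fin 4 → ℂ) :
    ((z 3 = 1 ∧ ∀ μ, z μ ^ 2 = 1) ∧
      ∃ Λ : (Fin 4 → ℤ) → ℂ, (∀ x, ‖Λ x‖ = 1) ∧
        (∀ x μ, Λ (x + L μ • Pi.single μ 1) = if μ = 0 then Λ x else conj (Λ x)) ∧
        ∀ x μ, phase (A x μ) = Λ x * (if x μ % L μ = L μ - 1 then z μ else 1) *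
          (Λ (x + Pi.single μ 1))⁻¹) ↔
    ∃ ζ, ((ζ 3 = 0 ∧ ∀ μ, 2 • ζ μ = 0) ∧ ∃ Θ, IsCStarVacuumGauge L A ζ Θ) ∧
      (fun μ => phase (ζ μ)) = z := by
  constructor
  · rintro ⟨⟨hz3, hz2⟩, Λ, hΛ1, hΛbc, hΛrep⟩
    choose ζ hζ using fun μ =>
      exists_phase_eq (Complex.norm_eq_one_of_pow_eq_one (hz2 μ) two_ne_zero)
    choose Θ hΘ using fun x => exists_phase_eq (hΛ1 x)
    obtain rfl : z = fun μ => phase (ζ μ) := funext fun μ => (hζ μ).symm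
    obtain rfl : Λ = fun x => phase (Θ x) := funext fun x => (hΘ x).symm
    refine ⟨ζ, ⟨⟨phase_injective (hz3.trans phase_zero.symm), fun μ => phase_injective ?_⟩, Θ,
      isCStarVacuumGauge_iff_phase.2 ⟨hΛbc, hΛrep⟩⟩, rfl⟩
    rw [phase_nsmul, hz2, phase_zero]
  · rintro ⟨ζ, ⟨⟨hζ3, hζ2⟩, Θ, hΘ⟩, rfl⟩
    exact ⟨⟨by simp only [hζ3, phase_zero], fun μ => by simp only [← phase_nsmul, hζ2, phase_zero]⟩,
      fun x => phase (Θ x), fun x => norm_phase _, isCStarVacuumGauge_iff_phase.1 hΘ⟩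

end Phase

/-- Classification of classical vacua of compact QED with C* boundary conditions in the
spatial directions and periodic time: every U(1) lattice gauge field with all plaquettes
equal to 1 is gauge-equivalent to exactly one representative `Ū_z` with
`z ∈ Ω = {(z₀,z₁,z₂,1) : z_i² = 1}`, where `Ū_z(x,μ) = z_μ` if `x_μ = L_μ - 1` and `1`
otherwise. -/
theorem stmt14 (Lsz : Fin 4 → ℤ) (hLsz : ∀ μ, 0 < Lsz μ)
    (U : (Fin 4 → ℤ) → Fin 4 → ℂ)
    (hU1 : ∀ x μ, ‖U x μ‖ = 1)
    (hbc : ∀ (x : Fin 4 → ℤ) (μ ρ : Fin 4),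
      U (x + Lsz μ • (Pi.single μ 1 : Fin 4 → ℤ)) ρ =
        if μ = 0 then U x ρ else (starRingEnd ℂ) (U x ρ))
    (hplaq : ∀ (x : Fin 4 → ℤ) (μ ν : Fin 4),
      U x μ * U (x + (Pi.single μ 1 : Fin 4 → ℤ)) ν *
        (U (x + (Pi.single ν 1 : Fin 4 → ℤ)) μ)⁻¹ * (U x ν)⁻¹ = 1) :
    ∃! z : Fin 4 → ℂ,
      (z 3 = 1 ∧ ∀ μ, z μ ^ 2 = 1) ∧
      ∃ Λ : (Fin 4 → ℤ) → ℂ,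
        (∀ x, ‖Λ x‖ = 1) ∧
        (∀ (x : Fin 4 → ℤ) (μ : Fin 4),
          Λ (x + Lsz μ • (Pi.single μ 1 : Fin 4 → ℤ)) =
            if μ = 0 then Λ x else (starRingEnd ℂ) (Λ x)) ∧
        (∀ (x : Fin 4 → ℤ) (μ : Fin 4),
          U x μ = Λ x * (if x μ % Lsz μ = Lsz μ - 1 then z μ else 1) *
            (Λ (x + (Pi.single μ 1 : Fin 4 → ℤ)))⁻¹) := by
  choose A hA using fun x μ => exists_phase_eq (hU1 x μ)
  obtain rfl : U = fun x μ => phase (A x μ) := funext₂ fun x μ => (hA x μ).symm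
  beta_reduce at hbc hplaq ⊢
  have hflat : IsFlat A := fun x μ ν => by
    have h := hplaq x μ ν
    rw [← phase_neg, ← phase_neg, ← phase_add, ← phase_add, ← phase_add, ← phase_zero,
      phase_injective.eq_iff] at h
    linear_combination (norm := abel) h
  have hbcA : ∀ x μ ρ, A (x + Lsz μ • Pi.single μ 1) ρ = cstarTwist μ (A x ρ) :=
    fun x μ ρ => phase_injective (by rw [phase_cstarTwist, hbc])
  refine (existsUnique_congr cstarVacuumLabel_phase_iff).2 ?_
  exact (existsUnique_cstarVacuumGauge exists_two_nsmul_eq hLsz hflat hbcA).image _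
end
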